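/- For n ≥ 2, there is no isometric immersion, even locally, of the hyperbolic n-space H^n into Euclidean space E^{n+k} when k < n − 1. (Cartan's non-immersion theorem) -/

import Mathlib

open Module Filter Topology ContinuousLinearMap
open scoped RealInnerProductSpace

/-- If a quartic with zero constant term is nonnegative everywhere, its quadratic
coefficient is nonnegative. -/
lemma quartic_nonneg_coeff {a b c d : ℝ}
    (h : ∀ t : ℝ, 0 ≤ a * t + b * t ^ 2 + c * t ^ 3 + d * t ^ 4) : 0 ≤ b := by
  have ha : a = 0 := by
    have h1 : ∀ t : ℝ, 0 < t → 0 ≤ a + b * t + c * t ^ 2 + d * t ^ 3 := by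
      intro t ht
      have := h t
      nlinarith [mul_pos ht ht]
    have h2 : ∀ t : ℝ, t < 0 → a + b * t + c * t ^ 2 + d * t ^ 3 ≤ 0 := by
      intro t ht
      have := h t
      nlinarith [mul_pos (neg_pos.2 ht) (neg_pos.2 ht)]
    have hcont : Tendsto (fun t : ℝ => a + b * t + c * t ^ 2 + d * t ^ 3) (𝓝 0) (𝓝 a) := by
      have : Continuous fun t : ℝ => a + b * t + c * t ^ 2 + d * t ^ 3 := by continuity
      simpa using this.tendsto 0
    have hge : 0 ≤ a :=
      ge_of_tendsto (hcont.mono_left nhdsWithin_le_nhds)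
        (eventually_nhdsWithin_of_forall (fun t (ht : t ∈ Set.Ioi (0:ℝ)) => h1 t ht))
    have hle : a ≤ 0 :=
      le_of_tendsto (hcont.mono_left nhdsWithin_le_nhds)
        (eventually_nhdsWithin_of_forall (fun t (ht : t ∈ Set.Iio (0:ℝ)) => h2 t ht))
    linarith
  subst ha
  have h1 : ∀ t : ℝ, t ≠ 0 → 0 ≤ b + c * t + d * t ^ 2 := by
    intro t ht
    have := h t
    have ht2 : 0 < t ^ 2 := by positivity
    nlinarith
  have hcont : Tendsto (fun t : ℝ => b + c * t + d * t ^ 2) (𝓝 0) (𝓝 b) := by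
    have : Continuous fun t : ℝ => b + c * t + d * t ^ 2 := by continuity
    simpa using this.tendsto 0
  exact ge_of_tendsto (hcont.mono_left nhdsWithin_le_nhds)
    (eventually_nhdsWithin_of_forall (fun t (ht : t ∈ ({0}ᶜ : Set ℝ)) => h1 t ht))

lemma key_estimate {W : Type*} [NormedAddCommGroup W] [InnerProductSpace ℝ W]
    (A B C : W) (m sB c4 : ℝ) (hc4 : 0 < c4)
    (hm : m = ⟪A, A⟫ + 1 / c4)
    (hgau : ⟪A, B⟫ - ⟪C, C⟫ = - (sB / c4))
    (hlow : ∀ t : ℝ, m * (1 + t ^ 2 * sB) ^ 2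
      ≤ ⟪A + (2 * t) • C + t ^ 2 • B, A + (2 * t) • C + t ^ 2 • B⟫
        + (1 + t ^ 2 * sB) ^ 2 / c4) :
    m * sB / 3 ≤ ⟪C, C⟫ := by
  have hpoly : ∀ t : ℝ, 0 ≤ (4 * ⟪A, C⟫) * t
      + (4 * ⟪C, C⟫ + 2 * ⟪A, B⟫ - 2 * sB * ⟪A, A⟫) * t ^ 2
      + (4 * ⟪C, B⟫) * t ^ 3 + (⟪B, B⟫ - sB ^ 2 * ⟪A, A⟫) * t ^ 4 := by
    intro t
    have h0 := hlow t
    have h2 : ⟪A + (2*t) • C + t ^ 2 • B, A + (2*t) • C + t ^ 2 • B⟫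
        = ⟪A, A⟫ + 4 * t * ⟪A, C⟫ + t ^ 2 * (4 * ⟪C, C⟫ + 2 * ⟪A, B⟫)
          + 4 * t ^ 3 * ⟪C, B⟫ + t ^ 4 * ⟪B, B⟫ := by
      simp only [inner_add_add_self, inner_add_left, inner_add_right,
        real_inner_smul_left, real_inner_smul_right, real_inner_comm B C,
        real_inner_comm C A, real_inner_comm B A]
      ring
    rw [h2, hm] at h0
    have he : (4 * ⟪A, C⟫) * t
        + (4 * ⟪C, C⟫ + 2 * ⟪A, B⟫ - 2 * sB * ⟪A, A⟫) * t ^ 2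
        + (4 * ⟪C, B⟫) * t ^ 3 + (⟪B, B⟫ - sB ^ 2 * ⟪A, A⟫) * t ^ 4
        = (⟪A, A⟫ + 4 * t * ⟪A, C⟫ + t ^ 2 * (4 * ⟪C, C⟫ + 2 * ⟪A, B⟫)
          + 4 * t ^ 3 * ⟪C, B⟫ + t ^ 4 * ⟪B, B⟫ + (1 + t ^ 2 * sB) ^ 2 / c4)
          - (⟪A, A⟫ + 1 / c4) * (1 + t ^ 2 * sB) ^ 2 := by
      field_simp
      ring
    rw [he]
    linarith
  have hb := quartic_nonneg_coeff hpoly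
  have hAB : ⟪A, B⟫ = ⟪C, C⟫ - sB / c4 := by linarith
  rw [hAB] at hb
  rw [hm]
  have e : (⟪A, A⟫ + 1 / c4) * sB / 3 = (2 * sB * ⟪A, A⟫ + 2 * (sB / c4)) / 6 := by ring
  rw [e]
  linarith

lemma otsuki {V W : Type*} [NormedAddCommGroup V] [InnerProductSpace ℝ V]
    [NormedAddCommGroup W] [InnerProductSpace ℝ W]
    [FiniteDimensional ℝ V] [FiniteDimensional ℝ W]
    {c : ℝ} (hc : 0 < c)
    (u : V →L[ℝ] W) (hu : ∀ v w : V, ⟪u v, u w⟫ = ⟪v, w⟫ / c ^ 2)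
    (α : V →L[ℝ] V →L[ℝ] W)
    (hperp : ∀ v w z : V, ⟪α v w, u z⟫ = 0)
    (hsymm : ∀ v w : V, α v w = α w v)
    (hgauss : ∀ v w : V, ⟪α v v, α w w⟫ - ⟪α v w, α v w⟫
       = (⟪v, w⟫ ^ 2 - ⟪v, v⟫ * ⟪w, w⟫) / c ^ 4)
    (hV : 1 ≤ finrank ℝ V) :
    finrank ℝ V + finrank ℝ V ≤ finrank ℝ W + 1 := by
  have hV' : Nontrivial V := nontrivial_of_finrank_pos (R := ℝ) hV
  have hc4 : (0:ℝ) < c ^ 4 := by positivity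
  have hαz : Continuous fun z : V => α z z :=
    isBoundedBilinearMap_apply.continuous.comp ((α.continuous).prodMk continuous_id)
  have hFc : Continuous fun z : V => ⟪α z z, α z z⟫ + ⟪z, z⟫ ^ 2 / c ^ 4 :=
    (hαz.inner hαz).add (((continuous_id.inner continuous_id).pow 2).div_const _)
  obtain ⟨x₀, hx₀s, hmin⟩ := (isCompact_sphere (0 : V) 1).exists_isMinOn
    (NormedSpace.sphere_nonempty.2 zero_le_one) hFc.continuousOn
  have hx₀ : ‖x₀‖ = 1 := mem_sphere_zero_iff_norm.1 hx₀s
  have hx₀i : ⟪x₀, x₀⟫ = 1 := by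
    rw [real_inner_self_eq_norm_sq, hx₀]; norm_num
  obtain ⟨m, hm⟩ : ∃ m : ℝ, m = ⟪α x₀ x₀, α x₀ x₀⟫ + 1 / c ^ 4 := ⟨_, rfl⟩
  have hmF : ⟪α x₀ x₀, α x₀ x₀⟫ + ⟪x₀, x₀⟫ ^ 2 / c ^ 4 = m := by rw [hx₀i, hm]; ring
  have hmpos : 0 < m := by
    have h2 : 0 ≤ ⟪α x₀ x₀, α x₀ x₀⟫ := real_inner_self_nonneg
    have : (0:ℝ) < 1 / c ^ 4 := by positivity
    rw [hm]; linarith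
  have hFscale : ∀ (s : ℝ) (w : V),
      ⟪α (s • w) (s • w), α (s • w) (s • w)⟫ + ⟪s • w, s • w⟫ ^ 2 / c ^ 4
        = s ^ 4 * (⟪α w w, α w w⟫ + ⟪w, w⟫ ^ 2 / c ^ 4) := by
    intro s w
    have hsc : α (s • w) (s • w) = (s * s) • α w w := by simp [map_smul, smul_smul]
    rw [hsc]
    simp only [real_inner_smul_left, real_inner_smul_right]
    ring
  have hFlow : ∀ z : V, m * ⟪z, z⟫ ^ 2 ≤ ⟪α z z, α z z⟫ + ⟪z, z⟫ ^ 2 / c ^ 4 := by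
    intro z
    rcases eq_or_ne z 0 with rfl | hz
    · simp
    · have hr : ‖z‖ ≠ 0 := norm_ne_zero_iff.2 hz
      have hzs : (‖z‖⁻¹ • z) ∈ Metric.sphere (0:V) 1 := by
        simp [norm_smul, inv_mul_cancel₀ hr]
      have h1 : m ≤ ⟪α (‖z‖⁻¹ • z) (‖z‖⁻¹ • z), α (‖z‖⁻¹ • z) (‖z‖⁻¹ • z)⟫
          + ⟪‖z‖⁻¹ • z, ‖z‖⁻¹ • z⟫ ^ 2 / c ^ 4 := by
        rw [← hmF]; exact hmin hzs
      have e1 := hFscale ‖z‖ (‖z‖⁻¹ • z)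
      rw [smul_inv_smul₀ hr] at e1
      have h3 : ⟪z, z⟫ = ‖z‖ ^ 2 := real_inner_self_eq_norm_sq z
      have h4 : (0:ℝ) ≤ ‖z‖ ^ 4 := by positivity
      have h5 := mul_le_mul_of_nonneg_left h1 h4
      rw [← e1] at h5
      calc m * ⟪z, z⟫ ^ 2 = ‖z‖ ^ 4 * m := by rw [h3]; ring
      _ ≤ _ := h5
  have hkey : ∀ y : V, ⟪x₀, y⟫ = 0 → m * ⟪y, y⟫ / 3 ≤ ⟪α x₀ y, α x₀ y⟫ := by
    intro y hy
    have hyx : ⟪y, x₀⟫ = 0 := by rw [real_inner_comm]; exact hy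
    apply key_estimate (α x₀ x₀) (α y y) (α x₀ y) m ⟪y, y⟫ (c ^ 4) hc4 hm
    · have hgau := hgauss x₀ y
      rw [hy, hx₀i] at hgau
      rw [hgau]; ring
    · intro t
      have hexp : α (x₀ + t • y) (x₀ + t • y)
          = α x₀ x₀ + (2 * t) • α x₀ y + t ^ 2 • α y y := by
        have h1 : α y x₀ = α x₀ y := hsymm y x₀
        simp only [map_add, map_smul, ContinuousLinearMap.add_apply,
          ContinuousLinearMap.coe_smul', Pi.smul_apply, h1, smul_smul]
        module
      have hinner : ⟪x₀ + t • y, x₀ + t • y⟫ = 1 + t ^ 2 * ⟪y, y⟫ := by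
        simp only [inner_add_add_self, real_inner_smul_left, real_inner_smul_right,
          hy, hyx, hx₀i]
        ring
      have := hFlow (x₀ + t • y)
      rw [hexp, hinner] at this
      exact this
  -- dimension count
  have hx₀ne : x₀ ≠ 0 := by
    intro h; rw [h] at hx₀; simp at hx₀
  have hmem : ∀ y : V, α x₀ y ∈ (LinearMap.range (u : V →ₗ[ℝ] W))ᗮ := by
    intro y
    rw [Submodule.mem_orthogonal]
    rintro w ⟨z, rfl⟩
    rw [real_inner_comm]
    exact hperp x₀ y z
  set L : (ℝ ∙ x₀)ᗮ →ₗ[ℝ] (LinearMap.range (u : V →ₗ[ℝ] W))ᗮ :=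
    LinearMap.codRestrict _ (((α x₀).toLinearMap).comp (ℝ ∙ x₀)ᗮ.subtype)
      (fun y => hmem y) with hL
  have hLinj : Function.Injective L := by
    rw [← LinearMap.ker_eq_bot, LinearMap.ker_eq_bot']
    rintro ⟨y, hy⟩ h0
    have h1 : α x₀ y = 0 := by
      have := congrArg (Subtype.val) h0
      exact this
    have hy0 : ⟪x₀, y⟫ = 0 :=
      (Submodule.mem_orthogonal _ y).1 hy x₀ (Submodule.mem_span_singleton_self x₀)
    have hk := hkey y hy0
    rw [h1] at hk
    simp only [inner_zero_left] at hk
    have : y = 0 := by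
      by_contra hne
      have h2 : (0:ℝ) < ⟪y, y⟫ := by
        rw [real_inner_self_eq_norm_sq]
        exact pow_pos (norm_pos_iff.2 hne) 2
      nlinarith [mul_pos hmpos h2]
    exact Subtype.ext this
  have huinj : Function.Injective (u : V →ₗ[ℝ] W) := by
    rw [← LinearMap.ker_eq_bot, LinearMap.ker_eq_bot']
    intro v hv
    by_contra hne
    have h2 : (0:ℝ) < ⟪v, v⟫ := by
      rw [real_inner_self_eq_norm_sq]
      exact pow_pos (norm_pos_iff.2 hne) 2
    have h3 := hu v v
    have hv' : u v = 0 := hv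
    rw [hv'] at h3
    simp only [inner_zero_left] at h3
    have : (0:ℝ) < ⟪v, v⟫ / c ^ 2 := by positivity
    rw [← h3] at this
    exact lt_irrefl 0 this
  have h1 : finrank ℝ (ℝ ∙ x₀) + finrank ℝ ((ℝ ∙ x₀)ᗮ : Submodule ℝ V) = finrank ℝ V :=
    (ℝ ∙ x₀).finrank_add_finrank_orthogonal
  have h2 : finrank ℝ (ℝ ∙ x₀ : Submodule ℝ V) = 1 := finrank_span_singleton hx₀ne
  have h3 : finrank ℝ (LinearMap.range (u : V →ₗ[ℝ] W))
      + finrank ℝ ((LinearMap.range (u : V →ₗ[ℝ] W))ᗮ : Submodule ℝ W) = finrank ℝ W :=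
    Submodule.finrank_add_finrank_orthogonal _
  have h4 : finrank ℝ (LinearMap.range (u : V →ₗ[ℝ] W)) = finrank ℝ V :=
    LinearMap.finrank_range_of_inj huinj
  have h5 : finrank ℝ ((ℝ ∙ x₀)ᗮ : Submodule ℝ V)
      ≤ finrank ℝ ((LinearMap.range (u : V →ₗ[ℝ] W))ᗮ : Submodule ℝ W) :=
    LinearMap.finrank_le_finrank_of_injective hLinj
  omega

section Calc

variable {V W : Type*} [NormedAddCommGroup V] [InnerProductSpace ℝ V]
  [NormedAddCommGroup W] [InnerProductSpace ℝ W]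

/-- Calculus stage of Cartan's theorem: the second derivative of a local isometric
immersion of (scaled) hyperbolic space satisfies explicit tangential and Gauss-type
identities. -/
lemma calculus_stage (Ω : Set V) (hΩ : IsOpen Ω) (f : V → W)
    (hf : ContDiffOn ℝ (⊤ : ℕ∞) f Ω) (e : V)
    (hΩe : ∀ x ∈ Ω, 0 < ⟪e, x⟫)
    (hmet : ∀ x ∈ Ω, ∀ v w : V, ⟪fderiv ℝ f x v, fderiv ℝ f x w⟫ = ⟪v, w⟫ / ⟪e, x⟫ ^ 2)
    (p : V) (hp : p ∈ Ω) :
    ∀ v w z : V,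
      (⟪fderiv ℝ (fderiv ℝ f) p v w, fderiv ℝ f p z⟫
        = (- ⟪w, z⟫ * ⟪e, v⟫ - ⟪v, z⟫ * ⟪e, w⟫ + ⟪v, w⟫ * ⟪e, z⟫) / ⟪e, p⟫ ^ 3)
      ∧ (⟪fderiv ℝ (fderiv ℝ f) p v v, fderiv ℝ (fderiv ℝ f) p w w⟫
          - ⟪fderiv ℝ (fderiv ℝ f) p v w, fderiv ℝ (fderiv ℝ f) p v w⟫
        = 3 * (2 * ⟪v, w⟫ * ⟪e, v⟫ * ⟪e, w⟫ - ⟪w, w⟫ * ⟪e, v⟫ ^ 2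
            - ⟪v, v⟫ * ⟪e, w⟫ ^ 2) / ⟪e, p⟫ ^ 4)
      ∧ (fderiv ℝ (fderiv ℝ f) p v w = fderiv ℝ (fderiv ℝ f) p w v) := by
  set Φ := fderiv ℝ f with hΦdef
  set Ψ := fderiv ℝ Φ with hΨdef
  set Θ := fderiv ℝ Ψ with hΘdef
  have hΦ : ContDiffOn ℝ (⊤ : ℕ∞) Φ Ω := hf.fderiv_of_isOpen hΩ (by simp)
  have hΨ : ContDiffOn ℝ (⊤ : ℕ∞) Ψ Ω := hΦ.fderiv_of_isOpen hΩ (by simp)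
  have hdf : ∀ x ∈ Ω, HasFDerivAt f (Φ x) x := fun x hx =>
    ((hf.contDiffAt (hΩ.mem_nhds hx)).differentiableAt (by simp)).hasFDerivAt
  have hdΦ : ∀ x ∈ Ω, HasFDerivAt Φ (Ψ x) x := fun x hx =>
    ((hΦ.contDiffAt (hΩ.mem_nhds hx)).differentiableAt (by simp)).hasFDerivAt
  have hdΨ : ∀ x ∈ Ω, HasFDerivAt Ψ (Θ x) x := fun x hx =>
    ((hΨ.contDiffAt (hΩ.mem_nhds hx)).differentiableAt (by simp)).hasFDerivAt
  -- derivative of a directional-derivative function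
  have hΦv : ∀ (v : V), ∀ x ∈ Ω,
      HasFDerivAt (fun y => Φ y v) ((apply ℝ W v).comp (Ψ x)) x := fun v x hx =>
    (apply ℝ W v).hasFDerivAt.comp x (hdΦ x hx)
  have hΨzv : ∀ (z v : V), ∀ x ∈ Ω,
      HasFDerivAt (fun y => Ψ y z v)
        (((apply ℝ W v).comp (apply ℝ (V →L[ℝ] W) z)).comp (Θ x)) x := by
    intro z v x hx
    have c := ((apply ℝ W v).comp (apply ℝ (V →L[ℝ] W) z))
    exact (((apply ℝ W v).comp (apply ℝ (V →L[ℝ] W) z)).hasFDerivAt (x := Ψ x)).comp x (hdΨ x hx) (𝕜 := ℝ) (E := V) (F := V →L[ℝ] V →L[ℝ] W) (G := W)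
  -- first derivative of the metric identity
  have star : ∀ x ∈ Ω, ∀ v w z : V,
      ⟪Ψ x z v, Φ x w⟫ + ⟪Φ x v, Ψ x z w⟫ = -2 * ⟪v, w⟫ * ⟪e, z⟫ / ⟪e, x⟫ ^ 3 := by
    intro x hx v w z
    have hL : HasFDerivAt (fun y => ⟪Φ y v, Φ y w⟫)
        ((fderivInnerCLM ℝ (Φ x v, Φ x w)).comp
          (((apply ℝ W v).comp (Ψ x)).prod ((apply ℝ W w).comp (Ψ x)))) x :=
      (hΦv v x hx).inner ℝ (hΦv w x hx)
    have hex : ⟪e, x⟫ ≠ 0 := (hΩe x hx).ne'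
    have hR : HasFDerivAt (fun y => ⟪v, w⟫ * ((⟪e, y⟫ : ℝ) ^ 2)⁻¹)
        ((⟪v, w⟫ * (-(2 * ⟪e, x⟫) / (⟪e, x⟫ ^ 2) ^ 2)) • (innerSL ℝ e : V →L[ℝ] ℝ)) x := by
      have h1 : HasFDerivAt (fun y : V => (⟪e, y⟫ : ℝ)) (innerSL ℝ e : V →L[ℝ] ℝ) x :=
        (innerSL ℝ e).hasFDerivAt
      have h2 : HasDerivAt (fun t : ℝ => ((t ^ 2)⁻¹ : ℝ))
          (-(2 * ⟪e, x⟫) / (⟪e, x⟫ ^ 2) ^ 2) ⟪e, x⟫ := by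
        have h3 : HasDerivAt (fun t : ℝ => t ^ 2) (2 * ⟪e, x⟫) ⟪e, x⟫ := by
          simpa using hasDerivAt_pow 2 (⟪e, x⟫ : ℝ)
        exact h3.inv (pow_ne_zero 2 hex)
      have h4 := (h2.comp_hasFDerivAt x h1).const_mul ⟪v, w⟫
      simpa [smul_smul] using h4
    have heq : (fun y => ⟪Φ y v, Φ y w⟫) =ᶠ[nhds x] fun y => ⟪v, w⟫ * ((⟪e, y⟫ : ℝ) ^ 2)⁻¹ := by
      filter_upwards [hΩ.mem_nhds hx] with y hy
      rw [hmet y hy v w, div_eq_mul_inv]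
    have := (hR.congr_of_eventuallyEq heq).unique hL
    have happ := congrArg (fun (L : V →L[ℝ] ℝ) => L z) this.symm
    simp only [ContinuousLinearMap.comp_apply, ContinuousLinearMap.prod_apply,
      fderivInnerCLM_apply, apply_apply, ContinuousLinearMap.smul_apply,
      innerSL_apply_apply, smul_eq_mul] at happ
    rw [show ⟪Φ x v, Ψ x z w⟫ + ⟪Ψ x z v, Φ x w⟫
        = ⟪Ψ x z v, Φ x w⟫ + ⟪Φ x v, Ψ x z w⟫ from by ring] at happ
    rw [happ]
    field_simp
  -- second derivative of the metric identity
  have hep : ⟪e, p⟫ ≠ 0 := (hΩe p hp).ne'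
  have starstar : ∀ v w z y : V,
      ⟪Θ p y z v, Φ p w⟫ + ⟪Ψ p z v, Ψ p y w⟫ + ⟪Φ p v, Θ p y z w⟫ + ⟪Ψ p y v, Ψ p z w⟫
        = 6 * ⟪v, w⟫ * ⟪e, z⟫ * ⟪e, y⟫ / ⟪e, p⟫ ^ 4 := by
    intro v w z y
    have hA := (hΨzv z v p hp).inner ℝ (hΦv w p hp)
    have hB := (hΦv v p hp).inner ℝ (hΨzv z w p hp)
    have hL := hA.add hB
    have hR : HasFDerivAt (fun x => (-2 * ⟪v, w⟫ * ⟪e, z⟫) * ((⟪e, x⟫ : ℝ) ^ 3)⁻¹)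
        (((-2 * ⟪v, w⟫ * ⟪e, z⟫) * (-(3 * ⟪e, p⟫ ^ 2) / (⟪e, p⟫ ^ 3) ^ 2))
          • (innerSL ℝ e : V →L[ℝ] ℝ)) p := by
      have h1 : HasFDerivAt (fun x : V => (⟪e, x⟫ : ℝ)) (innerSL ℝ e : V →L[ℝ] ℝ) p :=
        (innerSL ℝ e).hasFDerivAt
      have h2 : HasDerivAt (fun t : ℝ => ((t ^ 3)⁻¹ : ℝ))
          (-(3 * ⟪e, p⟫ ^ 2) / (⟪e, p⟫ ^ 3) ^ 2) ⟪e, p⟫ := by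
        have h3 : HasDerivAt (fun t : ℝ => t ^ 3) (3 * ⟪e, p⟫ ^ 2) ⟪e, p⟫ := by
          simpa using hasDerivAt_pow 3 (⟪e, p⟫ : ℝ)
        exact h3.inv (pow_ne_zero 3 hep)
      have h4 := (h2.comp_hasFDerivAt p h1).const_mul (-2 * ⟪v, w⟫ * ⟪e, z⟫)
      simpa [smul_smul] using h4
    have heq : (fun x => ⟪Ψ x z v, Φ x w⟫ + ⟪Φ x v, Ψ x z w⟫)
        =ᶠ[nhds p] fun x => (-2 * ⟪v, w⟫ * ⟪e, z⟫) * ((⟪e, x⟫ : ℝ) ^ 3)⁻¹ := by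
      filter_upwards [hΩ.mem_nhds hp] with x hx
      rw [star x hx v w z, div_eq_mul_inv]
    have huniq := (hR.congr_of_eventuallyEq heq).unique hL
    have happ := congrArg (fun (L : V →L[ℝ] ℝ) => L y) huniq.symm
    simp only [ContinuousLinearMap.add_apply, ContinuousLinearMap.comp_apply,
      ContinuousLinearMap.prod_apply, fderivInnerCLM_apply, apply_apply,
      ContinuousLinearMap.smul_apply, innerSL_apply_apply, smul_eq_mul] at happ
    rw [show ⟪Ψ p z v, Ψ p y w⟫ + ⟪Θ p y z v, Φ p w⟫ + (⟪Φ p v, Θ p y z w⟫ + ⟪Ψ p y v, Ψ p z w⟫)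
        = ⟪Θ p y z v, Φ p w⟫ + ⟪Ψ p z v, Ψ p y w⟫ + ⟪Φ p v, Θ p y z w⟫ + ⟪Ψ p y v, Ψ p z w⟫
        from by ring] at happ
    rw [happ]
    field_simp
    ring
  -- symmetries
  have symPsi : ∀ x ∈ Ω, ∀ a b : V, Ψ x a b = Ψ x b a := by
    intro x hx a b
    exact (hf.contDiffAt (hΩ.mem_nhds hx)).isSymmSndFDerivAt (by simp [minSmoothness_of_isRCLikeNormedField]; exact WithTop.coe_le_coe.2 le_top) a b
  have symTh12 : ∀ a b c : V, Θ p a b c = Θ p b a c := by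
    intro a b c
    have h := (hΦ.contDiffAt (hΩ.mem_nhds hp)).isSymmSndFDerivAt (n := ((⊤ : ℕ∞) : WithTop ℕ∞)) (by simp [minSmoothness_of_isRCLikeNormedField]; exact WithTop.coe_le_coe.2 le_top) a b
    rw [show Θ p a b = Θ p b a from h]
  have symTh23 : ∀ a b c : V, Θ p a b c = Θ p a c b := by
    intro a b c
    have h1 := hΨzv b c p hp
    have h2 := hΨzv c b p hp
    have heq : (fun x => Ψ x b c) =ᶠ[nhds p] fun x => Ψ x c b := by
      filter_upwards [hΩ.mem_nhds hp] with x hx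
      exact symPsi x hx b c
    have huniq := (h2.congr_of_eventuallyEq heq).unique h1
    have happ := congrArg (fun (L : V →L[ℝ] W) => L a) huniq
    simpa using happ.symm
  intro v w z
  refine ⟨?_, ?_, symPsi p hp v w⟩
  · -- tangential identity (Koszul)
    have h1 := star p hp w z v
    have h2 := star p hp v z w
    have h3 := star p hp v w z
    have e1 : ⟪Φ p w, Ψ p v z⟫ = ⟪Ψ p z v, Φ p w⟫ := by
      rw [real_inner_comm (Ψ p v z) (Φ p w), symPsi p hp v z]
    have e2 : ⟪Ψ p w v, Φ p z⟫ = ⟪Ψ p v w, Φ p z⟫ := by rw [symPsi p hp w v]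
    have e3 : ⟪Φ p v, Ψ p w z⟫ = ⟪Φ p v, Ψ p z w⟫ := by rw [symPsi p hp w z]
    rw [e1] at h1
    rw [e2, e3] at h2
    have hc3 : (⟪e, p⟫ : ℝ) ^ 3 ≠ 0 := pow_ne_zero 3 hep
    field_simp at h1 h2 h3 ⊢
    linarith
  · -- Gauss-type identity
    have I1 := starstar v w w v
    have I2 := starstar w w v v
    have I3 := starstar v v w w
    have e1 : Θ p v w v = Θ p v v w := symTh23 v w v
    have e2 : Θ p v w w = Θ p w w v := by rw [symTh12 v w w, symTh23 w v w]
    have e3 : ⟪Φ p v, Θ p w w v⟫ = ⟪Θ p w w v, Φ p v⟫ :=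
      real_inner_comm (Θ p w w v) (Φ p v)
    have e4 : ⟪Ψ p w v, Ψ p v w⟫ = ⟪Ψ p v w, Ψ p v w⟫ := by rw [symPsi p hp w v]
    have e5 : ⟪Φ p w, Θ p v v w⟫ = ⟪Θ p v v w, Φ p w⟫ :=
      real_inner_comm (Θ p v v w) (Φ p w)
    have e6 : ⟪Ψ p w v, Ψ p w v⟫ = ⟪Ψ p v w, Ψ p v w⟫ := by
      rw [symPsi p hp w v]
    rw [e1, e2, e3, e4] at I1
    rw [e5] at I2
    rw [e3, e6] at I3
    have hc4 : (⟪e, p⟫ : ℝ) ^ 4 ≠ 0 := pow_ne_zero 4 hep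
    field_simp at I1 I2 I3 ⊢
    linarith

end Calc

set_option maxHeartbeats 1000000 in
/-- **Cartan's non-immersion theorem**: for `n ≥ 2` and `k < n − 1` there is no isometric
immersion, even locally, of hyperbolic `n`-space `Hⁿ` into Euclidean space `E^{n+k}`.
`Hⁿ` is modelled by the upper half-space `{x : 0 < xₙ}` with the metric `(dx²)/xₙ²` of
constant curvature `−1`; a local isometric immersion is a smooth map on a nonempty open
subset whose differential pulls back the Euclidean inner product to this metric. -/
theorem cartan_no_local_isometric_immersion (n k : ℕ) (hn : 2 ≤ n) (hk : k < n - 1) :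
    ¬ ∃ (Ω : Set (EuclideanSpace ℝ (Fin n)))
        (f : EuclideanSpace ℝ (Fin n) → EuclideanSpace ℝ (Fin (n + k)))
        (D : EuclideanSpace ℝ (Fin n) →
              (EuclideanSpace ℝ (Fin n) →L[ℝ] EuclideanSpace ℝ (Fin (n + k)))),
      IsOpen Ω ∧ Ω.Nonempty ∧
      Ω ⊆ {x : EuclideanSpace ℝ (Fin n) | 0 < x ⟨n - 1, by omega⟩} ∧
      ContDiffOn ℝ (⊤ : ℕ∞) f Ω ∧
      (∀ x ∈ Ω, HasFDerivAt f (D x) x) ∧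
      (∀ x ∈ Ω, ∀ v w : EuclideanSpace ℝ (Fin n),
        (inner ℝ (D x v) (D x w) : ℝ) = (inner ℝ v w : ℝ) / (x ⟨n - 1, by omega⟩) ^ 2) := by
  rintro ⟨Ω, f, D, hΩ, hne, hsub, hf, hD, hG⟩
  set ν : Fin n := ⟨n - 1, by omega⟩ with hν
  set e : EuclideanSpace ℝ (Fin n) := EuclideanSpace.single ν (1 : ℝ) with he
  obtain ⟨p, hp⟩ := hne
  have hex : ∀ x : EuclideanSpace ℝ (Fin n), ⟪e, x⟫ = x ν := by
    intro x
    simp [he, EuclideanSpace.inner_single_left]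
  have hee : ⟪e, e⟫ = (1 : ℝ) := by
    rw [hex]; simp [he, EuclideanSpace.single_apply]
  have hΩe : ∀ x ∈ Ω, 0 < ⟪e, x⟫ := by
    intro x hx
    rw [hex]
    exact hsub hx
  have hfd : ∀ x ∈ Ω, fderiv ℝ f x = D x := fun x hx => (hD x hx).fderiv
  have hmet : ∀ x ∈ Ω, ∀ v w : EuclideanSpace ℝ (Fin n),
      ⟪fderiv ℝ f x v, fderiv ℝ f x w⟫ = ⟪v, w⟫ / ⟪e, x⟫ ^ 2 := by
    intro x hx v w
    rw [hfd x hx, hex]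
    exact hG x hx v w
  have hcal := calculus_stage Ω hΩ f (hf.of_le (by simp)) e hΩe hmet p hp
  have hc : (0 : ℝ) < ⟪e, p⟫ := hΩe p hp
  have hcne : (⟪e, p⟫ : ℝ) ≠ 0 := hc.ne'
  set S := fderiv ℝ (fderiv ℝ f) p with hS
  set u := D p with hu'
  have hT : ∀ a b z : EuclideanSpace ℝ (Fin n), ⟪S a b, u z⟫
      = (- ⟪b, z⟫ * ⟪e, a⟫ - ⟪a, z⟫ * ⟪e, b⟫ + ⟪a, b⟫ * ⟪e, z⟫) / ⟪e, p⟫ ^ 3 := by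
    intro a b z
    have := (hcal a b z).1
    rwa [hfd p hp] at this
  have hE : ∀ v w : EuclideanSpace ℝ (Fin n), ⟪S v v, S w w⟫ - ⟪S v w, S v w⟫
      = 3 * (2 * ⟪v, w⟫ * ⟪e, v⟫ * ⟪e, w⟫ - ⟪w, w⟫ * ⟪e, v⟫ ^ 2
          - ⟪v, v⟫ * ⟪e, w⟫ ^ 2) / ⟪e, p⟫ ^ 4 := fun v w => (hcal v w v).2.1
  have hSsym : ∀ v w : EuclideanSpace ℝ (Fin n), S v w = S w v := fun v w => (hcal v w v).2.2
  have huu : ∀ a b : EuclideanSpace ℝ (Fin n), ⟪u a, u b⟫ = ⟪a, b⟫ / ⟪e, p⟫ ^ 2 := by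
    intro a b
    have := hG p hp a b
    rwa [← hex p] at this
  -- the (normal-valued) second fundamental form
  set αf : EuclideanSpace ℝ (Fin n) → EuclideanSpace ℝ (Fin n) → EuclideanSpace ℝ (Fin (n+k)) := fun v w => S v w
      - (⟪e, p⟫)⁻¹ • (⟪v, w⟫ • u e - ⟪e, v⟫ • u w - ⟪e, w⟫ • u v) with hαf
  have hadd1 : ∀ v v' w : EuclideanSpace ℝ (Fin n), αf (v + v') w = αf v w + αf v' w := by
    intro v v' w
    simp only [hαf, map_add, ContinuousLinearMap.add_apply, inner_add_left, inner_add_right]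
    module
  have hsmul1 : ∀ (c : ℝ) (v w : EuclideanSpace ℝ (Fin n)), αf (c • v) w = c • αf v w := by
    intro c v w
    simp only [hαf, map_smul, ContinuousLinearMap.smul_apply, real_inner_smul_left,
      real_inner_smul_right]
    module
  have hadd2 : ∀ v w w' : EuclideanSpace ℝ (Fin n), αf v (w + w') = αf v w + αf v w' := by
    intro v w w'
    simp only [hαf, map_add, ContinuousLinearMap.add_apply, inner_add_left, inner_add_right]
    module
  have hsmul2 : ∀ (c : ℝ) (v w : EuclideanSpace ℝ (Fin n)), αf v (c • w) = c • αf v w := by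
    intro c v w
    simp only [hαf, map_smul, ContinuousLinearMap.smul_apply, real_inner_smul_left,
      real_inner_smul_right]
    module
  set αlin := LinearMap.mk₂ ℝ αf hadd1 hsmul1 hadd2 hsmul2 with hαlin
  obtain ⟨αclm, hα⟩ : ∃ αc : EuclideanSpace ℝ (Fin n) →L[ℝ]
        EuclideanSpace ℝ (Fin n) →L[ℝ] EuclideanSpace ℝ (Fin (n + k)),
      ∀ v w, αc v w = αf v w := by
    refine ⟨LinearMap.toContinuousLinearMap
      { toFun := fun v => LinearMap.toContinuousLinearMap (αlin v)
        map_add' := by intro a b; ext w; simp [map_add]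
        map_smul' := by intro c a; ext w; simp [map_smul] }, ?_⟩
    intro v w
    rfl
  -- hypotheses of the Otsuki-type lemma
  have hperp : ∀ v w z : EuclideanSpace ℝ (Fin n), ⟪αclm v w, u z⟫ = 0 := by
    intro v w z
    rw [hα, hαf]
    simp only [inner_sub_left, real_inner_smul_left, huu, hT]
    field_simp
    ring
  have hsymm : ∀ v w : EuclideanSpace ℝ (Fin n), αclm v w = αclm w v := by
    intro v w
    rw [hα, hα, hαf]
    simp only
    rw [hSsym v w, show ⟪w, v⟫ = ⟪v, w⟫ from real_inner_comm v w]
    module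
  have hgauss : ∀ v w : EuclideanSpace ℝ (Fin n), ⟪αclm v v, αclm w w⟫ - ⟪αclm v w, αclm v w⟫
      = (⟪v, w⟫ ^ 2 - ⟪v, v⟫ * ⟪w, w⟫) / ⟪e, p⟫ ^ 4 := by
    intro v w
    have l2 : ∀ (z a b : EuclideanSpace ℝ (Fin n)), ⟪u z, S a b⟫
        = (- ⟪b, z⟫ * ⟪e, a⟫ - ⟪a, z⟫ * ⟪e, b⟫ + ⟪a, b⟫ * ⟪e, z⟫) / ⟪e, p⟫ ^ 3 := by
      intro z a b
      rw [← hT a b z]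
      exact real_inner_comm (S a b) (u z)
    have hE' : ⟪S v v, S w w⟫ = ⟪S v w, S v w⟫
        + 3 * (2 * ⟪v, w⟫ * ⟪e, v⟫ * ⟪e, w⟫ - ⟪w, w⟫ * ⟪e, v⟫ ^ 2
          - ⟪v, v⟫ * ⟪e, w⟫ ^ 2) / ⟪e, p⟫ ^ 4 := by linarith [hE v w]
    rw [hα, hα, hα, hαf]
    simp only [inner_sub_left, inner_sub_right, real_inner_smul_left, real_inner_smul_right,
      hT, l2, huu]
    rw [hE']
    rw [show ⟪w, v⟫ = ⟪v, w⟫ from real_inner_comm v w,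
      show ⟪v, e⟫ = ⟪e, v⟫ from real_inner_comm e v,
      show ⟪w, e⟫ = ⟪e, w⟫ from real_inner_comm e w, hee]
    field_simp
    ring
  have hfin := otsuki hc u huu αclm hperp hsymm hgauss
    (by rw [finrank_euclideanSpace_fin]; omega)
  rw [finrank_euclideanSpace_fin, finrank_euclideanSpace_fin] at hfin
  omega
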